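/- Let p ≥ 4 be even. In the braid diagram B_W(p,p) with any ordering of base points, exactly half of the crossings are warping crossing points; hence the warping degree of B_W(p,p) equals p(p-1)/2. -/

import Mathlib

namespace Weaving

/-- A braid letter: 0-based generator index `k` (representing `σ_{k+1}`) and a sign
(`true` = positive crossing). -/
abbrev Letter := ℕ × Bool

/-- A braid diagram (word). Letters are read from top to bottom. -/
abbrev Word := List Letter

/-- Wellformedness of a word as a braid on `p` strands. -/
def WF (p : ℕ) (w : Word) : Prop := ∀ l ∈ w, l.1 + 2 ≤ p

/-- One round `σ_1 σ_2^{-1} σ_3 ⋯ σ_{p-1}^{(-1)^p}` of the weaving braid on `p` strands. -/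
def wRound (p : ℕ) : Word := (List.range (p - 1)).map fun k => (k, decide (k % 2 = 0))

/-- The weaving braid word `B_W(p,q) = (σ_1 σ_2^{-1} ⋯ σ_{p-1}^{(-1)^p})^q`. -/
def wWord (p q : ℕ) : Word := (List.replicate q (wRound p)).flatten

/-- The transposition of strand positions effected by one letter. -/
def letterPerm (l : Letter) : Equiv.Perm ℕ := Equiv.swap l.1 (l.1 + 1)

/-- The permutation of a braid word: sends the top position of a strand to its
bottom position. -/
def permOfWord (w : Word) : Equiv.Perm ℕ := ((w.map letterPerm).reverse).prod

/-- The position permutation just before the `n`-th crossing (0-based). -/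
def permUpTo (w : Word) (n : ℕ) : Equiv.Perm ℕ := permOfWord (w.take n)

/-- The label (top position) of the strand passing over at crossing `n`.
(Convention: at a positive letter `σ_k`, the strand at position `k` passes over.) -/
def overLabel (w : Word) (n : ℕ) : ℕ :=
  let l := w.getD n (0, true)
  (permUpTo w n)⁻¹ (if l.2 then l.1 else l.1 + 1)

/-- The label of the strand passing under at crossing `n`. -/
def underLabel (w : Word) (n : ℕ) : ℕ :=
  let l := w.getD n (0, true)
  (permUpTo w n)⁻¹ (if l.2 then l.1 + 1 else l.1)

/-- The number of warping crossing points of the braid diagram `w` with respect to a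
priority (ordering of base points) `r` on the strand labels: a crossing is warping
if the strand whose base point comes earlier passes under. -/
def warpCount (w : Word) (r : ℕ → ℕ) : ℕ :=
  ((List.range w.length).filter fun n =>
    decide (r (underLabel w n) < r (overLabel w n))).length

/-- The warping degree of a braid diagram: the minimum of `warpCount` over all
orderings of the base points at the tops of the strands. -/
noncomputable def warpingDegree (w : Word) : ℕ :=
  sInf { m | ∃ r : ℕ → ℕ, Function.Injective r ∧ warpCount w r = m }

/-- A sequence of base points (a list enumerating the strands `0,…,p-1`) follows the
closure if, whenever the closure-successor of the current strand has not yet appeared,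
it is the next base point. -/
def FollowsClosure (p : ℕ) (w : Word) (bs : List ℕ) : Prop :=
  bs.Perm (List.range p) ∧ ∀ m, m + 1 < bs.length →
    permOfWord w (bs.getD m 0) ∉ bs.take (m + 1) →
    bs.getD (m + 1) 0 = permOfWord w (bs.getD m 0)

/-- The closed warping degree of a braid diagram. -/
noncomputable def closedWarpingDegree (p : ℕ) (w : Word) : ℕ :=
  sInf { m | ∃ bs : List ℕ, FollowsClosure p w bs ∧
    warpCount w (fun a => List.idxOf a bs) = m }

/-- The strands of the closure component of strand `i`, in traversal order. -/
def strandCycle (w : Word) (p i : ℕ) : List ℕ :=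
  ((List.range p).map fun t => ((permOfWord w)^[t]) i).dedup

/-- The crossings met by strand `i` from top to bottom, with a flag recording whether
the strand passes under there. -/
def strandPassages (w : Word) (i : ℕ) : List (ℕ × Bool) :=
  ((List.range w.length).filter fun n =>
    (overLabel w n == i) || (underLabel w n == i)).map
    fun n => (n, underLabel w n == i)

/-- All the crossing passages of the closure component of strand `i`, in the cyclic
order in which they are traversed starting from the top of strand `i`. -/
def compPassages (w : Word) (p i : ℕ) : List (ℕ × Bool) :=
  (strandCycle w p i).flatMap (strandPassages w)

/-- `starts` contains exactly one strand representative on each closure component. -/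
def ValidStarts (p : ℕ) (w : Word) (starts : List ℕ) : Prop :=
  ∀ i < p, ∃! s, s ∈ starts ∧ i ∈ strandCycle w p s

/-- The passage sequence of the whole closure diagram determined by a choice of
base points: component representatives `starts` and rotations `ts` (positions of the
base points along the components). -/
def fullTraversal (w : Word) (p : ℕ) (starts ts : List ℕ) : List (ℕ × Bool) :=
  ((starts.zip ts).map fun st => (compPassages w p st.1).rotate st.2).flatten

/-- Same, for the reversed orientation of the closure. -/
def fullTraversalRev (w : Word) (p : ℕ) (starts ts : List ℕ) : List (ℕ × Bool) :=
  ((starts.zip ts).map fun st => ((compPassages w p st.1).reverse).rotate st.2).flatten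

/-- Crossing `n` is a warping crossing point of the traversal `T` if it is first met
as an under-crossing. -/
def warpInTraversal (T : List (ℕ × Bool)) (n : ℕ) : Bool :=
  ((T.filter fun x => x.1 == n).headD (0, false)).2

def traversalWarpCount (w : Word) (T : List (ℕ × Bool)) : ℕ :=
  ((List.range w.length).filter fun n => warpInTraversal T n).length

/-- The warping degree of the closure diagram of `w` (with the braid orientation):
the minimum number of warping crossing points over all choices of base points. -/
noncomputable def closureWarpingDegree (p : ℕ) (w : Word) : ℕ :=
  sInf { m | ∃ starts ts : List ℕ, ValidStarts p w starts ∧ ts.length = starts.length ∧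
    traversalWarpCount w (fullTraversal w p starts ts) = m }

/-- The warping degree of the closure diagram of `w` with reversed orientation. -/
noncomputable def closureWarpingDegreeRev (p : ℕ) (w : Word) : ℕ :=
  sInf { m | ∃ starts ts : List ℕ, ValidStarts p w starts ∧ ts.length = starts.length ∧
    traversalWarpCount w (fullTraversalRev w p starts ts) = m }

/-- Relations of the braid group on `p` strands (generators `0,…,p-2`). -/
def braidRels (p : ℕ) : Set (FreeGroup (Fin (p - 1))) :=
  { r | (∃ i j : Fin (p - 1), (i : ℕ) + 1 = (j : ℕ) ∧
          r = FreeGroup.of i * FreeGroup.of j * FreeGroup.of i *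
              (FreeGroup.of j * FreeGroup.of i * FreeGroup.of j)⁻¹) ∨
        (∃ i j : Fin (p - 1), (i : ℕ) + 2 ≤ (j : ℕ) ∧
          r = FreeGroup.of i * FreeGroup.of j * (FreeGroup.of j * FreeGroup.of i)⁻¹) }

/-- The braid group on `p` strands. -/
abbrev BraidGroup (p : ℕ) := PresentedGroup (braidRels p)

def letterToBraid (p : ℕ) (l : Letter) : BraidGroup p :=
  if h : l.1 < p - 1 then
    (if l.2 then PresentedGroup.of ⟨l.1, h⟩ else (PresentedGroup.of ⟨l.1, h⟩)⁻¹)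
  else 1

/-- The element of the braid group represented by a word. -/
def toBraid (p : ℕ) (w : Word) : BraidGroup p := (w.map (letterToBraid p)).prod

/-- Markov moves on closed braid diagrams: braid-group equality, conjugation
(cyclic permutation), and (de)stabilization. -/
inductive MarkovStep : ℕ × Word → ℕ × Word → Prop
  | braid (p : ℕ) (w w' : Word) : WF p w → WF p w' → toBraid p w = toBraid p w' →
      MarkovStep (p, w) (p, w')
  | conj (p : ℕ) (w₁ w₂ : Word) : WF p (w₁ ++ w₂) → MarkovStep (p, w₁ ++ w₂) (p, w₂ ++ w₁)
  | stab (p : ℕ) (w : Word) (b : Bool) : WF p w → 1 ≤ p →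
      MarkovStep (p, w) (p + 1, w ++ [(p - 1, b)])

/-- Two closed braid diagrams represent the same link iff they are Markov equivalent. -/
def MarkovEquiv : ℕ × Word → ℕ × Word → Prop := Relation.EqvGen MarkovStep

/-- The closure of `(p, w)` represents a trivial link (an unlink). -/
def IsTrivialClosure (p : ℕ) (w : Word) : Prop := ∃ r : ℕ, MarkovEquiv (p, w) (r, [])

/-- The canonical representative (minimum label) of the closure component of strand `i`. -/
def orbitMin (w : Word) (p i : ℕ) : ℕ := (strandCycle w p i).foldr min i

/-- The number of components of the closure of `(p, w)`. -/
def numComponents (p : ℕ) (w : Word) : ℕ := ((Finset.range p).image (orbitMin w p)).card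

/-- The closure of `(p, w)` is the unknot. -/
def IsUnknot (p : ℕ) (w : Word) : Prop := IsTrivialClosure p w ∧ numComponents p w = 1

/-- Apply crossing changes at the set `S` of crossing indices. -/
def flipAt (w : Word) (S : Finset ℕ) : Word :=
  (w.zipIdx.map Prod.swap).map fun nl => if nl.1 ∈ S then (nl.2.1, !nl.2.2) else nl.2

/-- `u(B)`: the minimum number of crossing changes on the braid diagram `w` making its
closure a trivial link. -/
noncomputable def braidUnknottingNumber (p : ℕ) (w : Word) : ℕ :=
  sInf { m | ∃ S : Finset ℕ, S ⊆ Finset.range w.length ∧ S.card = m ∧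
    IsTrivialClosure p (flipAt w S) }

/-- The unknotting (unlinking) number of the link represented by the closure of
`(p, w)`: the minimum number of crossing changes over all diagrams of the link. -/
noncomputable def linkUnknottingNumber (p : ℕ) (w : Word) : ℕ :=
  sInf { m | ∃ p' w', MarkovEquiv (p, w) (p', w') ∧
    ∃ S : Finset ℕ, S ⊆ Finset.range w'.length ∧ S.card = m ∧
      IsTrivialClosure p' (flipAt w' S) }

/-- The sign of crossing `n` (all strands oriented downwards). -/
def crossingSign (w : Word) (n : ℕ) : ℤ := if (w.getD n (0, true)).2 then 1 else -1

/-- The linking number of the closure components of strands `i` and `j` (assumed to lie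
on distinct components): half the signed count of their mutual crossings. -/
def lk (w : Word) (i j : ℕ) : ℤ :=
  (∑ n ∈ Finset.range w.length,
    if (overLabel w n = i ∧ underLabel w n = j) ∨ (overLabel w n = j ∧ underLabel w n = i)
    then crossingSign w n else 0) / 2

/-- The linking number between the closure components represented by `a` and `b`. -/
def compLk (p : ℕ) (w : Word) (a b : ℕ) : ℤ :=
  (∑ n ∈ Finset.range w.length,
    if (orbitMin w p (overLabel w n) = a ∧ orbitMin w p (underLabel w n) = b) ∨
       (orbitMin w p (overLabel w n) = b ∧ orbitMin w p (underLabel w n) = a)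
    then crossingSign w n else 0) / 2

/-- A link is proper if the total linking number of each component with all the
others is even. -/
def IsProper (p : ℕ) (w : Word) : Prop :=
  ∀ a ∈ (Finset.range p).image (orbitMin w p),
    (2 : ℤ) ∣ ∑ b ∈ ((Finset.range p).image (orbitMin w p)).erase a, compLk p w a b

/-- The closure of `(p, w)` is a split link. -/
def IsSplit (p : ℕ) (w : Word) : Prop :=
  ∃ p' w', MarkovEquiv (p, w) (p', w') ∧ WF p' w' ∧
    ∃ k, k + 1 < p' ∧ ∀ l ∈ w', l.1 ≠ k

/-- The connected sum diagram of the closures of a braid on `a` strands and a braid on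
`b` strands, as a braid on `a + b - 1` strands sharing one strand. -/
def connSum (a : ℕ) (w₁ w₂ : Word) : Word := w₁ ++ w₂.map fun l => (l.1 + (a - 1), l.2)

/-- The closure of `(p, w)` is a prime link: it is not the unknot and in every
connected-sum decomposition one factor is the unknot. -/
def IsPrime (p : ℕ) (w : Word) : Prop :=
  ¬ IsUnknot p w ∧
  ∀ a b : ℕ, ∀ w₁ w₂ : Word, 1 ≤ a → 1 ≤ b → WF a w₁ → WF b w₂ →
    MarkovEquiv (p, w) (a + b - 1, connSum a w₁ w₂) →
    IsUnknot a w₁ ∨ IsUnknot b w₂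


section WeavingAux

lemma permOfWord_append (w₁ w₂ : Word) :
    permOfWord (w₁ ++ w₂) = permOfWord w₂ * permOfWord w₁ := by
  simp [permOfWord]

lemma permOfWord_singleton (l : Letter) : permOfWord [l] = letterPerm l := by
  simp [permOfWord]

lemma permOfWord_flatten_replicate (a : Word) (q : ℕ) :
    permOfWord ((List.replicate q a).flatten) = (permOfWord a) ^ q := by
  induction q with
  | zero => simp [permOfWord]
  | succ n ih =>
      rw [List.replicate_succ, List.flatten_cons, permOfWord_append, ih, pow_succ]

/-- The partial round permutation. -/
def Qp (k : ℕ) : Equiv.Perm ℕ :=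
  permOfWord ((List.range k).map fun j => (j, decide (j % 2 = 0)))

lemma Qp_zero : Qp 0 = 1 := rfl

lemma Qp_succ (k : ℕ) : Qp (k + 1) = Equiv.swap k (k + 1) * Qp k := by
  rw [Qp, List.range_succ, List.map_append, permOfWord_append]
  simp [Qp, permOfWord_singleton, letterPerm]

lemma Qp_fix {k x : ℕ} (h : k < x) : Qp k x = x := by
  induction k with
  | zero => simp [Qp_zero]
  | succ n ih =>
      rw [Qp_succ]
      simp only [Equiv.Perm.mul_apply, ih (Nat.lt_of_succ_lt h)]
      exact Equiv.swap_apply_of_ne_of_ne (by omega) (by omega)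

lemma Qp_apply_zero (k : ℕ) : Qp k 0 = k := by
  induction k with
  | zero => simp [Qp_zero]
  | succ n ih =>
      rw [Qp_succ]
      simp [Equiv.Perm.mul_apply, ih, Equiv.swap_apply_left]

lemma Qp_apply_of_le {k x : ℕ} (h1 : 1 ≤ x) (h2 : x ≤ k) : Qp k x = x - 1 := by
  induction k with
  | zero => omega
  | succ n ih =>
      rw [Qp_succ]
      rcases Nat.lt_or_ge x (n + 1) with h | h
      · simp only [Equiv.Perm.mul_apply, ih (by omega)]
        exact Equiv.swap_apply_of_ne_of_ne (by omega) (by omega)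
      · have hx : x = n + 1 := by omega
        subst hx
        simp [Equiv.Perm.mul_apply, Qp_fix (Nat.lt_succ_self n), Equiv.swap_apply_right]

lemma Qp_inv_self (k : ℕ) : (Qp k)⁻¹ k = 0 := by
  rw [Equiv.Perm.inv_eq_iff_eq]; exact (Qp_apply_zero k).symm

lemma Qp_inv_succ (k : ℕ) : (Qp k)⁻¹ (k + 1) = k + 1 := by
  rw [Equiv.Perm.inv_eq_iff_eq]; exact (Qp_fix (Nat.lt_succ_self k)).symm

lemma wRound_eq (p : ℕ) : permOfWord (wRound p) = Qp (p - 1) := rfl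

lemma Qp_inv_apply {p x : ℕ} (hp : 2 ≤ p) (hx : x < p) :
    (Qp (p - 1))⁻¹ x = (x + 1) % p := by
  rw [Equiv.Perm.inv_eq_iff_eq]
  rcases Nat.lt_or_ge (x + 1) p with h | h
  · rw [Nat.mod_eq_of_lt h, Qp_apply_of_le (by omega) (by omega)]; omega
  · have : x + 1 = p := by omega
    rw [this, Nat.mod_self, Qp_apply_zero]; omega

lemma Qp_inv_pow_apply {p : ℕ} (hp : 2 ≤ p) (q : ℕ) :
    ∀ x < p, ((Qp (p - 1))⁻¹ ^ q) x = (x + q) % p := by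
  induction q with
  | zero => intro x hx; simp [Nat.mod_eq_of_lt hx]
  | succ n ih =>
      intro x hx
      rw [pow_succ, Equiv.Perm.mul_apply, Qp_inv_apply hp hx,
        ih _ (Nat.mod_lt _ (by omega)), Nat.mod_add_mod]
      congr 1; omega

lemma flatten_replicate_take {α : Type*} (a : List α) :
    ∀ q qq k, k ≤ a.length → qq < q →
    ((List.replicate q a).flatten).take (qq * a.length + k) =
      (List.replicate qq a).flatten ++ a.take k := by
  intro q
  induction q with
  | zero => intro qq k _ h; omega
  | succ n ih =>
      intro qq k hk hq
      match qq with
      | 0 =>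
          simp only [List.replicate_succ, List.flatten_cons, Nat.zero_mul, Nat.zero_add]
          rw [List.take_append_of_le_length hk]
          simp
      | m + 1 =>
          rw [List.replicate_succ, List.flatten_cons]
          have : (m + 1) * a.length + k = a.length + (m * a.length + k) := by ring
          rw [this, List.take_length_add_append, ih m k hk (by omega), List.replicate_succ,
            List.flatten_cons, List.append_assoc]

lemma flatten_replicate_getD {α : Type*} (a : List α) (d : α) :
    ∀ q qq k, k < a.length → qq < q →
    ((List.replicate q a).flatten).getD (qq * a.length + k) d = a.getD k d := by
  intro q
  induction q with
  | zero => intro qq k _ h; omega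
  | succ n ih =>
      intro qq k hk hq
      match qq with
      | 0 =>
          rw [List.replicate_succ, List.flatten_cons]
          simp only [Nat.zero_mul, Nat.zero_add]
          rw [List.getD_eq_getElem?_getD, List.getD_eq_getElem?_getD,
            List.getElem?_append_left hk]
      | m + 1 =>
          rw [List.replicate_succ, List.flatten_cons]
          have h1 : (m + 1) * a.length + k = a.length + (m * a.length + k) := by ring
          rw [h1, List.getD_eq_getElem?_getD, List.getElem?_append_right (by omega),
            Nat.add_sub_cancel_left, ← List.getD_eq_getElem?_getD, ih m k hk (by omega)]

lemma wRound_length (p : ℕ) : (wRound p).length = p - 1 := by simp [wRound]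

lemma wWord_length (p q : ℕ) : (wWord p q).length = q * (p - 1) := by
  simp [wWord, wRound, List.length_flatten, Function.comp]

lemma wRound_getD {p k : ℕ} (hk : k < p - 1) (d : Letter) :
    (wRound p).getD k d = (k, decide (k % 2 = 0)) := by
  rw [wRound, List.getD_eq_getElem?_getD, List.getElem?_map, List.getElem?_range hk]
  rfl

lemma wRound_take_perm {p k : ℕ} (hk : k ≤ p - 1) :
    permOfWord ((wRound p).take k) = Qp k := by
  rw [wRound, ← List.map_take, List.take_range, Nat.min_eq_left hk]; rfl

/-- The explicit over-label function. -/
def ovl (p n : ℕ) : ℕ :=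
  if (n % (p - 1)) % 2 = 0 then n / (p - 1) else (n / (p - 1) + n % (p - 1) + 1) % p

/-- The explicit under-label function. -/
def unl (p n : ℕ) : ℕ :=
  if (n % (p - 1)) % 2 = 0 then (n / (p - 1) + n % (p - 1) + 1) % p else n / (p - 1)

/-- The pairing involution on crossings. -/
def invo (p n : ℕ) : ℕ :=
  ((n / (p - 1) + n % (p - 1) + 1) % p) * (p - 1) + (p - 2 - n % (p - 1))

lemma labels_eq {p qq k : ℕ} (hp : 2 ≤ p) (hq : qq < p) (hk : k < p - 1) :
    overLabel (wWord p p) (qq * (p - 1) + k)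
      = (if k % 2 = 0 then qq else (qq + k + 1) % p) ∧
    underLabel (wWord p p) (qq * (p - 1) + k)
      = (if k % 2 = 0 then (qq + k + 1) % p else qq) := by
  have hlen : (wRound p).length = p - 1 := wRound_length p
  have hget : (wWord p p).getD (qq * (p - 1) + k) (0, true) = (k, decide (k % 2 = 0)) := by
    rw [wWord, show qq * (p - 1) + k = qq * (wRound p).length + k by rw [hlen],
      flatten_replicate_getD _ _ _ _ _ (by omega) hq, wRound_getD hk]
  have hperm : permUpTo (wWord p p) (qq * (p - 1) + k) = Qp k * (Qp (p - 1)) ^ qq := by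
    rw [permUpTo, wWord, show qq * (p - 1) + k = qq * (wRound p).length + k by rw [hlen],
      flatten_replicate_take _ _ _ _ (by omega) hq, permOfWord_append,
      permOfWord_flatten_replicate, wRound_take_perm (by omega), wRound_eq]
  have hinv : ∀ x, (permUpTo (wWord p p) (qq * (p - 1) + k))⁻¹ x
      = (((Qp (p - 1))⁻¹) ^ qq) ((Qp k)⁻¹ x) := by
    intro x
    rw [hperm, mul_inv_rev, inv_pow, Equiv.Perm.mul_apply]
  constructor
  · rw [overLabel]
    simp only [hget, hinv]
    by_cases h : k % 2 = 0
    · simp only [h, if_true]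
      rw [if_pos (by simp [h]), Qp_inv_self, Qp_inv_pow_apply hp qq 0 (by omega),
        Nat.zero_add, Nat.mod_eq_of_lt hq]
    · rw [if_neg h, if_neg (by simp [h]), Qp_inv_succ,
        Qp_inv_pow_apply hp qq (k + 1) (by omega)]
      congr 1; omega
  · rw [underLabel]
    simp only [hget, hinv]
    by_cases h : k % 2 = 0
    · simp only [h, if_true]
      rw [if_pos (by simp [h]), Qp_inv_succ, Qp_inv_pow_apply hp qq (k + 1) (by omega)]
      congr 1; omega
    · rw [if_neg h, if_neg (by simp [h]), Qp_inv_self,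
        Qp_inv_pow_apply hp qq 0 (by omega), Nat.zero_add, Nat.mod_eq_of_lt hq]

lemma labels_eq' {p n : ℕ} (hp : 2 ≤ p) (hn : n < p * (p - 1)) :
    overLabel (wWord p p) n = ovl p n ∧ underLabel (wWord p p) n = unl p n := by
  have h1 : 0 < p - 1 := by omega
  have hk : n % (p - 1) < p - 1 := Nat.mod_lt _ h1
  have hq : n / (p - 1) < p := Nat.div_lt_of_lt_mul (by rw [Nat.mul_comm]; exact hn)
  have hrep : n / (p - 1) * (p - 1) + n % (p - 1) = n := by
    rw [Nat.mul_comm]; exact Nat.div_add_mod n (p - 1)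
  have := labels_eq hp hq hk
  rw [hrep] at this
  exact ⟨this.1, this.2⟩

lemma invo_div_mod {p n : ℕ} (hp : 2 ≤ p) (hn : n < p * (p - 1)) :
    invo p n / (p - 1) = (n / (p - 1) + n % (p - 1) + 1) % p ∧
    invo p n % (p - 1) = p - 2 - n % (p - 1) ∧ invo p n < p * (p - 1) := by
  have h1 : 0 < p - 1 := by omega
  have hk : n % (p - 1) < p - 1 := Nat.mod_lt _ h1
  have hk' : p - 2 - n % (p - 1) < p - 1 := by omega
  have hq' : (n / (p - 1) + n % (p - 1) + 1) % p < p := Nat.mod_lt _ (by omega)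
  refine ⟨?_, ?_, ?_⟩
  · rw [invo, Nat.mul_comm _ (p - 1), Nat.mul_add_div h1, Nat.div_eq_of_lt hk', Nat.add_zero]
  · rw [invo, Nat.mul_comm ((n / (p - 1) + n % (p - 1) + 1) % p) (p - 1), Nat.mul_add_mod,
      Nat.mod_eq_of_lt hk']
  · rw [invo]
    calc ((n / (p - 1) + n % (p - 1) + 1) % p) * (p - 1) + (p - 2 - n % (p - 1))
        ≤ (p - 1) * (p - 1) + (p - 2) := by
          refine Nat.add_le_add (Nat.mul_le_mul_right _ (by omega)) (by omega)
      _ < p * (p - 1) := by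
          obtain ⟨a, rfl⟩ : ∃ a, p = a + 1 := ⟨p - 1, by omega⟩
          have h5 : (a + 1) * (a + 1 - 1) = a * a + a := by
            rw [Nat.add_sub_cancel]; ring
          have h6 : (a + 1 - 1) * (a + 1 - 1) = a * a := by
            rw [Nat.add_sub_cancel]
          rw [h5, h6]
          omega

lemma invo_invo {p n : ℕ} (hp : 2 ≤ p) (hn : n < p * (p - 1)) :
    invo p (invo p n) = n := by
  have h1 : 0 < p - 1 := by omega
  have hk : n % (p - 1) < p - 1 := Nat.mod_lt _ h1
  have hq : n / (p - 1) < p := Nat.div_lt_of_lt_mul (by rw [Nat.mul_comm]; exact hn)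
  obtain ⟨hd, hm, _⟩ := invo_div_mod hp hn
  rw [invo, hd, hm]
  have h2 : (n / (p - 1) + n % (p - 1) + 1) % p + (p - 2 - n % (p - 1)) + 1
      = (n / (p - 1) + n % (p - 1) + 1) % p + (p - 1 - n % (p - 1)) := by omega
  have h3 : ((n / (p - 1) + n % (p - 1) + 1) % p + (p - 1 - n % (p - 1))) % p
      = n / (p - 1) := by
    rw [Nat.mod_add_mod]
    have : n / (p - 1) + n % (p - 1) + 1 + (p - 1 - n % (p - 1)) = n / (p - 1) + p := by
      omega
    rw [this, Nat.add_mod_right, Nat.mod_eq_of_lt hq]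
  rw [h2, h3]
  have h4 : p - 2 - (p - 2 - n % (p - 1)) = n % (p - 1) := by omega
  rw [h4, Nat.mul_comm]
  exact Nat.div_add_mod n (p - 1)

lemma invo_labels {p n : ℕ} (hp : 4 ≤ p) (he : Even p) (hn : n < p * (p - 1)) :
    ovl p (invo p n) = unl p n ∧ unl p (invo p n) = ovl p n := by
  have h1 : 0 < p - 1 := by omega
  have hk : n % (p - 1) < p - 1 := Nat.mod_lt _ h1
  have hq : n / (p - 1) < p := Nat.div_lt_of_lt_mul (by rw [Nat.mul_comm]; exact hn)
  obtain ⟨hd, hm, _⟩ := invo_div_mod (by omega) hn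
  have hpe : p % 2 = 0 := Nat.even_iff.mp he
  have hpar : (p - 2 - n % (p - 1)) % 2 = (n % (p - 1)) % 2 := by omega
  have h3 : ((n / (p - 1) + n % (p - 1) + 1) % p + (p - 2 - n % (p - 1)) + 1) % p
      = n / (p - 1) := by
    rw [show (n / (p - 1) + n % (p - 1) + 1) % p + (p - 2 - n % (p - 1)) + 1
        = (n / (p - 1) + n % (p - 1) + 1) % p + (p - 1 - n % (p - 1)) by omega,
      Nat.mod_add_mod,
      show n / (p - 1) + n % (p - 1) + 1 + (p - 1 - n % (p - 1)) = n / (p - 1) + p by omega,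
      Nat.add_mod_right, Nat.mod_eq_of_lt hq]
  constructor
  · rw [ovl, unl, hd, hm, hpar]
    by_cases h : (n % (p - 1)) % 2 = 0
    · rw [if_pos h, if_pos h]
    · rw [if_neg h, if_neg h, h3]
  · rw [unl, ovl, hd, hm, hpar]
    by_cases h : (n % (p - 1)) % 2 = 0
    · rw [if_pos h, if_pos h, h3]
    · rw [if_neg h, if_neg h]

lemma unl_ne_ovl {p n : ℕ} (hp : 2 ≤ p) (hn : n < p * (p - 1)) : unl p n ≠ ovl p n := by
  have h1 : 0 < p - 1 := by omega
  have hk : n % (p - 1) < p - 1 := Nat.mod_lt _ h1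
  have hq : n / (p - 1) < p := Nat.div_lt_of_lt_mul (by rw [Nat.mul_comm]; exact hn)
  have key : (n / (p - 1) + n % (p - 1) + 1) % p ≠ n / (p - 1) := by
    intro h
    have h2 : n / (p - 1) + n % (p - 1) + 1 ≡ n / (p - 1) [MOD p] := by
      unfold Nat.ModEq
      rw [h, Nat.mod_eq_of_lt hq]
    have h3 : p ∣ (n / (p - 1) + n % (p - 1) + 1) - n / (p - 1) :=
      (Nat.modEq_iff_dvd' (by omega)).mp h2.symm
    have h4 : (n / (p - 1) + n % (p - 1) + 1) - n / (p - 1) = n % (p - 1) + 1 := by omega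
    rw [h4] at h3
    have := Nat.le_of_dvd (by omega) h3
    omega
  rw [unl, ovl]
  by_cases h : (n % (p - 1)) % 2 = 0
  · rw [if_pos h, if_pos h]; exact key
  · rw [if_neg h, if_neg h]; exact fun h' => key h'.symm

lemma list_filter_range_card (P : ℕ → Bool) (N : ℕ) :
    ((List.range N).filter P).length = ((Finset.range N).filter (fun n => P n)).card := by
  simp [Finset.range, Finset.filter, Multiset.range]

end WeavingAux

/-- For even `p ≥ 4`, in `B_W(p,p)` every ordering of the base points makes exactly
half of the crossings warping crossing points; hence `d(B_W(p,p)) = p(p-1)/2`. -/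
theorem warpingDegree_wWord_even (p : ℕ) (hp : 4 ≤ p) (he : Even p) :
    (∀ r : ℕ → ℕ, Function.Injective r →
      2 * warpCount (wWord p p) r = (wWord p p).length) ∧
    warpingDegree (wWord p p) = p * (p - 1) / 2 := by
  have hp2 : 2 ≤ p := by omega
  have main : ∀ r : ℕ → ℕ, Function.Injective r →
      2 * warpCount (wWord p p) r = (wWord p p).length := by
    intro r hr
    have hN : (wWord p p).length = p * (p - 1) := wWord_length p p
    rw [hN, warpCount, hN]
    have hfil : ((List.range (p * (p - 1))).filter fun n =>
        decide (r (underLabel (wWord p p) n) < r (overLabel (wWord p p) n)))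
        = ((List.range (p * (p - 1))).filter fun n => decide (r (unl p n) < r (ovl p n))) := by
      apply List.filter_congr
      intro n hn
      rw [List.mem_range] at hn
      rw [(labels_eq' hp2 hn).1, (labels_eq' hp2 hn).2]
    rw [hfil, list_filter_range_card]
    have hcard : ((Finset.range (p * (p - 1))).filter
          fun n => decide (r (unl p n) < r (ovl p n)) = true).card
        = ((Finset.range (p * (p - 1))).filter
          fun n => ¬ (decide (r (unl p n) < r (ovl p n)) = true)).card := by
      apply Finset.card_bij' (i := fun n _ => invo p n) (j := fun n _ => invo p n)
      · intro n hn
        rw [Finset.mem_filter, Finset.mem_range] at hn ⊢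
        obtain ⟨hlt, hw⟩ := hn
        obtain ⟨_, _, hin⟩ := invo_div_mod hp2 hlt
        refine ⟨hin, ?_⟩
        rw [(invo_labels hp he hlt).1, (invo_labels hp he hlt).2]
        simp only [decide_eq_true_eq] at hw ⊢
        exact fun h => lt_asymm hw h
      · intro n hn
        rw [Finset.mem_filter, Finset.mem_range] at hn ⊢
        obtain ⟨hlt, hw⟩ := hn
        obtain ⟨_, _, hin⟩ := invo_div_mod hp2 hlt
        refine ⟨hin, ?_⟩
        rw [(invo_labels hp he hlt).1, (invo_labels hp he hlt).2]
        simp only [decide_eq_true_eq] at hw ⊢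
        have hne : r (unl p n) ≠ r (ovl p n) := fun h => unl_ne_ovl hp2 hlt (hr h)
        omega
      · intro n hn
        rw [Finset.mem_filter, Finset.mem_range] at hn
        exact invo_invo hp2 hn.1
      · intro n hn
        rw [Finset.mem_filter, Finset.mem_range] at hn
        exact invo_invo hp2 hn.1
    rw [two_mul]
    nth_rewrite 2 [hcard]
    rw [Finset.card_filter_add_card_filter_not, Finset.card_range]
  refine ⟨main, ?_⟩
  have hset : { m | ∃ r : ℕ → ℕ, Function.Injective r ∧ warpCount (wWord p p) r = m }
      = {p * (p - 1) / 2} := by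
    ext m
    simp only [Set.mem_setOf_eq, Set.mem_singleton_iff]
    constructor
    · rintro ⟨r, hr, rfl⟩
      have h := main r hr
      rw [wWord_length] at h
      set M := p * (p - 1) with hM
      omega
    · rintro rfl
      refine ⟨id, fun a b h => h, ?_⟩
      have h := main id (fun a b h => h)
      rw [wWord_length] at h
      set M := p * (p - 1) with hM
      omega
  rw [warpingDegree, hset, csInf_singleton]

end Weaving
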